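/- Under the basic independence model in which the p-values of true nulls are i.i.d. uniform on [0,1], the Benjamini–Hochberg step-up test with critical values α_i = iα/m has FDR exactly equal to (m_0/m)·α. -/

import Mathlib

open MeasureTheory ProbabilityTheory Finset
open scoped Classical
noncomputable section

/-- `#{i : p i ≤ t}`, i.e. `m·F̂_m(t)`. -/
def countLE {m : ℕ} (p : Fin m → ℝ) (t : ℝ) : ℕ :=
  (Finset.univ.filter (fun i => p i ≤ t)).card

/-- The `i`-th order statistic `p_{i:m}` (for `1 ≤ i ≤ m`), characterized by
`p_{i:m} ≤ t ↔ i ≤ #{k : p k ≤ t}`. -/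
def orderStat {m : ℕ} (p : Fin m → ℝ) (i : ℕ) : ℝ :=
  sInf {t | i ≤ countLE p t}

/-- Step-up rejection number `R = max {j : p_{j:m} ≤ α_j}` (`max ∅ = 0`). -/
def suR {m : ℕ} (α : ℕ → ℝ) (p : Fin m → ℝ) : ℕ :=
  WithBot.unbotD 0 ((Finset.range (m+1)).filter (fun j => 1 ≤ j ∧ orderStat p j ≤ α j)).max

/-- Step-down rejection number `R = max {j : p_{i:m} ≤ α_i for all i ≤ j}`. -/
def sdR {m : ℕ} (α : ℕ → ℝ) (p : Fin m → ℝ) : ℕ :=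
  WithBot.unbotD 0 ((Finset.range (m+1)).filter
    (fun j => ∀ i ∈ Finset.Icc 1 j, orderStat p i ≤ α i)).max

/-- FDR `= E[V / max(R,1)]` for rejection number `R` and rejection rule `rej`. -/
def FDR {Ω : Type*} [MeasurableSpace Ω] (μ : Measure Ω) {m : ℕ}
    (p : Ω → Fin m → ℝ) (I0 : Finset (Fin m))
    (R : (Fin m → ℝ) → ℕ) (rej : (Fin m → ℝ) → Fin m → Prop) : ℝ :=
  ∫ ω, ((I0.filter (fun i => rej (p ω) i)).card : ℝ) / (max (R (p ω)) 1 : ℕ) ∂μ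

/-- FDR of the step-up test with critical values `α`. -/
def suFDR {Ω : Type*} [MeasurableSpace Ω] (μ : Measure Ω) {m : ℕ}
    (α : ℕ → ℝ) (p : Ω → Fin m → ℝ) (I0 : Finset (Fin m)) : ℝ :=
  FDR μ p I0 (suR α) (fun q i => q i ≤ α (suR α q))

/-- FDR of the step-down test with critical values `α`
(rejecting the hypotheses belonging to `p_{i:m}`, `i ≤ R`). -/
def sdFDR {Ω : Type*} [MeasurableSpace Ω] (μ : Measure Ω) {m : ℕ}
    (α : ℕ → ℝ) (p : Ω → Fin m → ℝ) (I0 : Finset (Fin m)) : ℝ :=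
  FDR μ p I0 (sdR α) (fun q i => 1 ≤ sdR α q ∧ q i ≤ orderStat q (sdR α q))

/-- Benjamini–Hochberg critical values `b_j = jα/m`. -/
def bh (m : ℕ) (α : ℝ) (j : ℕ) : ℝ := j * α / m

/-- The uniform distribution on `[0,1]`. -/
def unif01 : Measure ℝ := volume.restrict (Set.Icc 0 1)

/-!
Write `V / max(R, 1)` as `∑_{i ∈ I₀} ∑_{k ≥ 1} 1{p_i ≤ kα/m, R = k} / k`. On the event
`p_i ≤ kα/m`, the event `R = k` is unchanged when `p_i` is replaced by `0`; the rejection number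
`R⁽ⁱ⁾` of the modified vector depends only on the other p-values, hence is independent of the
uniform `p_i`. Each summand therefore has expectation `(kα/m) P(R⁽ⁱ⁾ = k) / k = (α/m) P(R⁽ⁱ⁾ = k)`,
and since `R⁽ⁱ⁾ ≥ 1` always, summing over `k` gives `α/m` for every true null.
-/

section StepUp

variable {m : ℕ}

lemma countLE_mono (p : Fin m → ℝ) : Monotone (countLE p) := fun _ _ hst =>
  card_le_card fun _ hi => by
    simp only [mem_filter, mem_univ, true_and] at hi ⊢
    exact hi.trans hst

lemma le_countLE_iff_exists (p : Fin m → ℝ) (j : ℕ) (t : ℝ) :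
    j ≤ countLE p t ↔ ∃ s ∈ univ.powersetCard j, ∀ i ∈ s, p i ≤ t := by
  constructor
  · intro h
    obtain ⟨s, hs, hcard⟩ := exists_subset_card_eq h
    exact ⟨s, mem_powersetCard.2 ⟨subset_univ s, hcard⟩, fun i hi => (mem_filter.1 (hs hi)).2⟩
  · rintro ⟨s, hs, hle⟩
    rw [← (mem_powersetCard.1 hs).2]
    exact card_le_card fun i hi => mem_filter.2 ⟨mem_univ i, hle i hi⟩

lemma isClosed_setOf_le_countLE (p : Fin m → ℝ) (j : ℕ) : IsClosed {t | j ≤ countLE p t} := by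
  have : {t | j ≤ countLE p t} = ⋃ s ∈ univ.powersetCard j, ⋂ i ∈ s, Set.Ici (p i) := by
    ext t
    simp [le_countLE_iff_exists]
  rw [this]
  exact isClosed_biUnion_finset fun s _ => isClosed_biInter fun i _ => isClosed_Ici

lemma orderStat_le_iff (p : Fin m → ℝ) {j : ℕ} (hj : 1 ≤ j) (hjm : j ≤ m) (t : ℝ) :
    orderStat p j ≤ t ↔ j ≤ countLE p t := by
  set S := {t | j ≤ countLE p t}
  obtain ⟨b, hb⟩ := (Set.finite_range p).bddAbove
  obtain ⟨c, hc⟩ := (Set.finite_range p).bddBelow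
  have hne : S.Nonempty := ⟨b, by
    simpa [S, countLE, filter_true_of_mem fun i _ => hb (Set.mem_range_self i)] using hjm⟩
  have hbdd : BddBelow S := ⟨c, fun s hs => by
    obtain ⟨i, hi⟩ := card_pos.1 (lt_of_lt_of_le hj hs)
    exact (hc (Set.mem_range_self i)).trans (mem_filter.1 hi).2⟩
  have hmem : orderStat p j ∈ S := (isClosed_setOf_le_countLE p j).csInf_mem hne hbdd
  exact ⟨fun h => hmem.trans (countLE_mono p h), fun h => csInf_le hbdd h⟩

variable {a : ℕ → ℝ}

lemma suR_eq_zero_or_orderStat_le (a : ℕ → ℝ) (p : Fin m → ℝ) :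
    suR a p = 0 ∨ 1 ≤ suR a p ∧ suR a p ≤ m ∧ orderStat p (suR a p) ≤ a (suR a p) := by
  unfold suR
  rcases h : ((range (m + 1)).filter fun j => 1 ≤ j ∧ orderStat p j ≤ a j).max with _ | k
  · exact Or.inl rfl
  · obtain ⟨hk, hk1, hka⟩ := mem_filter.1 (mem_of_max h)
    exact Or.inr ⟨hk1, Nat.lt_succ_iff.1 (mem_range.1 hk), hka⟩

lemma suR_le (a : ℕ → ℝ) (p : Fin m → ℝ) : suR a p ≤ m := by
  rcases suR_eq_zero_or_orderStat_le a p with h | h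
  · exact h ▸ Nat.zero_le m
  · exact h.2.1

lemma le_suR {p : Fin m → ℝ} {j : ℕ} (hj : 1 ≤ j) (hjm : j ≤ m) (h : j ≤ countLE p (a j)) :
    j ≤ suR a p := by
  have hmem : j ∈ (range (m + 1)).filter fun j => 1 ≤ j ∧ orderStat p j ≤ a j :=
    mem_filter.2 ⟨mem_range.2 (Nat.lt_succ_of_le hjm), hj, (orderStat_le_iff p hj hjm _).2 h⟩
  obtain ⟨k, hk⟩ := max_of_mem hmem
  unfold suR
  rw [hk]
  exact le_max_of_eq hmem hk

lemma suR_le_countLE {p : Fin m → ℝ} (h : 1 ≤ suR a p) : suR a p ≤ countLE p (a (suR a p)) := by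
  rcases suR_eq_zero_or_orderStat_le a p with h0 | ⟨h1, hRm, hle⟩
  · omega
  · exact (orderStat_le_iff p h1 hRm _).1 hle

lemma suR_eq_iff {p : Fin m → ℝ} {k : ℕ} (hk : 1 ≤ k) (hkm : k ≤ m) :
    suR a p = k ↔ k ≤ countLE p (a k) ∧ ∀ j, k < j → j ≤ m → countLE p (a j) < j := by
  constructor
  · rintro rfl
    refine ⟨suR_le_countLE hk, fun j hkj hjm => ?_⟩
    by_contra! hj
    exact absurd (le_suR (hk.trans hkj.le) hjm hj) (not_le.2 hkj)
  · rintro ⟨hk_le, hgt⟩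
    have hkR : k ≤ suR a p := le_suR hk hkm hk_le
    by_contra hne
    have hlt : k < suR a p := lt_of_le_of_ne hkR (Ne.symm hne)
    exact absurd (suR_le_countLE (hk.trans hkR)) (not_le.2 (hgt _ hlt (suR_le a p)))

lemma one_le_suR {p : Fin m → ℝ} {i : Fin m} (h : p i ≤ a 1) : 1 ≤ suR a p :=
  le_suR le_rfl i.pos (card_pos.2 ⟨i, mem_filter.2 ⟨mem_univ i, h⟩⟩)

lemma countLE_update_of_le {p : Fin m → ℝ} {i : Fin m} {c t : ℝ} (hpi : p i ≤ t) (hc : c ≤ t) :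
    countLE (Function.update p i c) t = countLE p t := by
  unfold countLE
  congr 1
  refine filter_congr fun j _ => ?_
  rcases eq_or_ne j i with rfl | hji
  · simp [hpi, hc]
  · simp [Function.update_of_ne hji]

lemma suR_update_eq_iff (ha : Monotone a) {p : Fin m → ℝ} {i : Fin m} {c : ℝ} {k : ℕ}
    (hk : 1 ≤ k) (hkm : k ≤ m) (hpi : p i ≤ a k) (hc : c ≤ a k) :
    suR a (Function.update p i c) = k ↔ suR a p = k := by
  have hcount : ∀ j, k ≤ j → countLE (Function.update p i c) (a j) = countLE p (a j) :=
    fun j hj => countLE_update_of_le (hpi.trans (ha hj)) (hc.trans (ha hj))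
  rw [suR_eq_iff hk hkm, suR_eq_iff hk hkm, hcount k le_rfl]
  refine and_congr_right fun _ => forall_congr' fun j => imp_congr_right fun hkj => ?_
  rw [hcount j hkj.le]

lemma card_rejected_div_eq_sum_indicator (ha : Monotone a) (q : Fin m → ℝ) (I0 : Finset (Fin m)) :
    ((I0.filter fun i => q i ≤ a (suR a q)).card : ℝ) / (max (suR a q) 1 : ℕ)
      = ∑ i ∈ I0, ∑ k ∈ Icc 1 m,
          {q : Fin m → ℝ | q i ≤ a k ∧ suR a q = k}.indicator (fun _ => (k : ℝ)⁻¹) q := by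
  have hinner : ∀ i, ∑ k ∈ Icc 1 m,
      {q : Fin m → ℝ | q i ≤ a k ∧ suR a q = k}.indicator (fun _ => (k : ℝ)⁻¹) q
        = if 1 ≤ suR a q ∧ q i ≤ a (suR a q) then ((suR a q : ℕ) : ℝ)⁻¹ else 0 := by
    intro i
    simp only [Set.indicator_apply, Set.mem_ofPred, and_comm (a := q i ≤ _), ite_and]
    rw [sum_ite_eq]
    simp [suR_le]
  simp_rw [hinner]
  rcases Nat.eq_zero_or_pos (suR a q) with h0 | h1
  · have hnone : ∀ i ∈ I0, a 0 < q i := fun i _ => by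
      by_contra! hi
      have := one_le_suR (hi.trans (ha zero_le_one))
      omega
    simpa [h0] using hnone
  · simp [Nat.one_le_iff_ne_zero.2 h1.ne', sum_ite, div_eq_mul_inv]


lemma measurable_countLE (t : ℝ) : Measurable fun q : Fin m → ℝ => countLE q t := by
  simp only [countLE, card_filter]
  exact Finset.measurable_sum _ fun i _ =>
    Measurable.ite (measurableSet_le (measurable_pi_apply i) measurable_const)
      measurable_const measurable_const

lemma measurableSet_suR_eq {k : ℕ} (hk : 1 ≤ k) (hkm : k ≤ m) :
    MeasurableSet {q : Fin m → ℝ | suR a q = k} := by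
  simp only [suR_eq_iff hk hkm, measurableSet_setOfPred]
  refine (measurableSet_setOfPred.1 (measurableSet_le measurable_const (measurable_countLE _))).and
    (Measurable.forall fun j => measurable_const.imp (measurable_const.imp ?_))
  exact measurableSet_setOfPred.1 (measurableSet_lt (measurable_countLE _) measurable_const)

end StepUp

namespace ProbabilityTheory

variable {Ω : Type*} {mΩ : MeasurableSpace Ω} {μ : Measure Ω}

lemma IndepFun.indepFun_prodMk_of_prodMk {β γ δ : Type*} [MeasurableSpace β] [MeasurableSpace γ]
    [MeasurableSpace δ] {X : Ω → β} {Y : Ω → γ} {Z : Ω → δ}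
    [IsProbabilityMeasure μ] (hX : Measurable X) (hY : Measurable Y) (hZ : Measurable Z)
    (hXY : IndepFun X Y μ) (hXYZ : IndepFun (fun ω => (X ω, Y ω)) Z μ) :
    IndepFun X (fun ω => (Y ω, Z ω)) μ := by
  have hYZ : IndepFun Y Z μ := hXYZ.comp measurable_snd measurable_id
  rw [indepFun_iff_map_prod_eq_prod_map_map hX.aemeasurable (hY.prodMk hZ).aemeasurable,
    hYZ.map_prod_eq_prod_map_map hY.aemeasurable hZ.aemeasurable]
  have hlaw := hXYZ.map_prod_eq_prod_map_map (hX.prodMk hY).aemeasurable hZ.aemeasurable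
  rw [hXY.map_prod_eq_prod_map_map hX.aemeasurable hY.aemeasurable] at hlaw
  calc μ.map (fun ω => (X ω, Y ω, Z ω))
      = (μ.map fun ω => ((X ω, Y ω), Z ω)).map MeasurableEquiv.prodAssoc := by
        rw [Measure.map_map MeasurableEquiv.prodAssoc.measurable ((hX.prodMk hY).prodMk hZ)]
        rfl
    _ = (μ.map X).prod ((μ.map Y).prod (μ.map Z)) := by
        rw [hlaw]
        exact (measurePreserving_prodAssoc _ _ _).map_eq

lemma iIndepFun.indepFun_update {ι β : Type*} [Fintype ι] [DecidableEq ι] [MeasurableSpace β]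
    {f : ι → Ω → β} (hf : iIndepFun f μ) (hmeas : ∀ i, Measurable (f i)) (i : ι) (c : β) :
    IndepFun (f i) (fun ω => Function.update (fun j => f j ω) i c) μ := by
  have h := hf.indepFun_finset {i} (univ.erase i) (disjoint_singleton_left.2 (notMem_erase i _))
    hmeas
  refine h.comp (φ := fun v => v ⟨i, mem_singleton_self i⟩)
    (ψ := fun v j => if hj : j = i then c else v ⟨j, mem_erase.2 ⟨hj, mem_univ j⟩⟩)
    (measurable_pi_apply _) (measurable_pi_lambda _ fun j => ?_) |>.congr ?_ ?_
  · by_cases hj : j = i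
    · simp only [hj, dite_true]; exact measurable_const
    · simp only [hj, dite_false]; exact measurable_pi_apply _
  · rfl
  · refine Filter.Eventually.of_forall fun ω => funext fun j => ?_
    by_cases hj : j = i <;> simp [hj]

end ProbabilityTheory

lemma unif01_Iic {t : ℝ} (ht : t ≤ 1) : unif01 (Set.Iic t) = ENNReal.ofReal t := by
  have hIcc : Set.Iic t ∩ Set.Icc 0 1 = Set.Icc 0 t := by
    ext x
    simp only [Set.mem_inter_iff, Set.mem_Iic, Set.mem_Icc]
    constructor
    · exact fun ⟨hxt, hx0, _⟩ => ⟨hx0, hxt⟩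
    · exact fun ⟨hx0, hxt⟩ => ⟨hxt, hx0, hxt.trans ht⟩
  rw [unif01, Measure.restrict_apply measurableSet_Iic, hIcc, Real.volume_Icc, sub_zero]

section Model
open ProbabilityTheory

variable {Ω : Type*} [MeasurableSpace Ω] {μ : Measure Ω} {m : ℕ} {I0 : Finset (Fin m)}
  {p : Ω → Fin m → ℝ} {a : ℕ → ℝ}

lemma indepFun_update_zero_of_mem [IsProbabilityMeasure μ]
    (hmeas : ∀ i, Measurable fun ω => p ω i)
    (hBI2 : IndepFun (fun ω (i : {i // i ∈ I0}) => p ω i) (fun ω (i : {i // i ∉ I0}) => p ω i) μ)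
    (hBI3 : iIndepFun (fun (i : {i // i ∈ I0}) ω => p ω i.1) μ) {i : Fin m} (hi : i ∈ I0) :
    IndepFun (fun ω => p ω i) (fun ω => Function.update (p ω) i 0) μ := by
  set i0 : {i // i ∈ I0} := ⟨i, hi⟩
  set Y : Ω → {i // i ∈ I0} → ℝ := fun ω => Function.update (fun j => p ω j) i0 0
  set Z : Ω → {i // i ∉ I0} → ℝ := fun ω j => p ω j
  have hmY : Measurable Y := by
    have hmtrue : Measurable fun ω (j : {i // i ∈ I0}) => p ω j :=
      measurable_pi_lambda _ fun j => hmeas j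
    fun_prop
  have hmZ : Measurable Z := measurable_pi_lambda _ fun j => hmeas j
  have hXY : IndepFun (fun ω => p ω i) Y μ := hBI3.indepFun_update (fun j => hmeas j) i0 0
  have hXYZ : IndepFun (fun ω => (p ω i, Y ω)) Z μ :=
    hBI2.comp (φ := fun v => (v i0, Function.update v i0 0)) (ψ := id)
      (by fun_prop) measurable_id
  have hsplit : (fun ω => Function.update (p ω) i 0)
      = (MeasurableEquiv.piEquivPiSubtypeProd (fun _ => ℝ) (· ∈ I0)).symm
          ∘ fun ω => (Y ω, Z ω) := by
    ext ω j
    by_cases hj : j ∈ I0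
    · rcases eq_or_ne j i with rfl | hji
      · simp [Y, i0, hj]
      · simp [Y, i0, hj, hji]
    · have hji : j ≠ i := fun h => hj (h ▸ hi)
      simp [Z, hj, Function.update_of_ne hji]
  rw [hsplit]
  exact (hXY.indepFun_prodMk_of_prodMk (hmeas i) hmY hmZ hXYZ).comp measurable_id
    (MeasurableEquiv.measurable _)

lemma measurableSet_rejected_and_suR_eq (i : Fin m) {k : ℕ} (hk : 1 ≤ k) (hkm : k ≤ m) :
    MeasurableSet {q : Fin m → ℝ | q i ≤ a k ∧ suR a q = k} :=
  (measurableSet_le (measurable_pi_apply i) measurable_const).inter (measurableSet_suR_eq hk hkm)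

lemma suFDR_eq_sum_measureReal [IsFiniteMeasure μ] (ha : Monotone a)
    (hmeas : ∀ i, Measurable fun ω => p ω i) :
    suFDR μ a p I0 = ∑ i ∈ I0, ∑ k ∈ Icc 1 m,
      μ.real (p ⁻¹' {q | q i ≤ a k ∧ suR a q = k}) * (k : ℝ)⁻¹ := by
  have hp : Measurable p := measurable_pi_lambda _ hmeas
  have hevent : ∀ i, ∀ k ∈ Icc 1 m, MeasurableSet (p ⁻¹' {q | q i ≤ a k ∧ suR a q = k}) :=
    fun i k hk => hp (measurableSet_rejected_and_suR_eq i (mem_Icc.1 hk).1 (mem_Icc.1 hk).2)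
  unfold suFDR FDR
  simp_rw [card_rejected_div_eq_sum_indicator ha]
  rw [integral_finsetSum _ fun i _ => integrable_finsetSum _ fun k hk =>
    (integrable_const _).indicator (hevent i k hk)]
  refine sum_congr rfl fun i _ => ?_
  rw [integral_finsetSum _ fun k hk => (integrable_const _).indicator (hevent i k hk)]
  exact sum_congr rfl fun k hk => integral_indicator_const _ (hevent i k hk)

lemma measureReal_rejected_and_suR_eq [IsProbabilityMeasure μ] (ha : Monotone a) (ha1 : 0 ≤ a 1)
    {i : Fin m} {k : ℕ} (hk : 1 ≤ k) (hkm : k ≤ m) (hak : a k ≤ 1)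
    (hmeas : ∀ i, Measurable fun ω => p ω i)
    (hBI2 : IndepFun (fun ω (i : {i // i ∈ I0}) => p ω i) (fun ω (i : {i // i ∉ I0}) => p ω i) μ)
    (hBI3 : iIndepFun (fun (i : {i // i ∈ I0}) ω => p ω i.1) μ)
    (hi : i ∈ I0) (hunif : Measure.map (fun ω => p ω i) μ = unif01) :
    μ.real (p ⁻¹' {q | q i ≤ a k ∧ suR a q = k})
      = a k * μ.real ((fun ω => Function.update (p ω) i 0) ⁻¹' {q | suR a q = k}) := by
  have hak0 : 0 ≤ a k := ha1.trans (ha hk)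
  have hsplit : p ⁻¹' {q | q i ≤ a k ∧ suR a q = k}
      = (fun ω => p ω i) ⁻¹' Set.Iic (a k)
        ∩ (fun ω => Function.update (p ω) i 0) ⁻¹' {q | suR a q = k} := by
    ext ω
    exact and_congr_right fun hpi => (suR_update_eq_iff ha hk hkm hpi hak0).symm
  have hlaw : μ ((fun ω => p ω i) ⁻¹' Set.Iic (a k)) = ENNReal.ofReal (a k) := by
    rw [← Measure.map_apply (hmeas i) measurableSet_Iic, hunif, unif01_Iic hak]
  rw [hsplit, measureReal_def, measureReal_def,
    (indepFun_update_zero_of_mem hmeas hBI2 hBI3 hi).measure_inter_preimage_eq_mul _ _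
      measurableSet_Iic (measurableSet_suR_eq hk hkm),
    hlaw, ENNReal.toReal_mul, ENNReal.toReal_ofReal hak0]

lemma sum_measureReal_suR_eq_one [IsProbabilityMeasure μ] {Q : Ω → Fin m → ℝ}
    (hQ : Measurable Q) {i : Fin m} (hQi : ∀ ω, Q ω i ≤ a 1) :
    ∑ k ∈ Icc 1 m, μ.real (Q ⁻¹' {q | suR a q = k}) = 1 := by
  have hcover : (fun ω => suR a (Q ω)) ⁻¹' ↑(Icc 1 m) = Set.univ :=
    Set.eq_univ_of_forall fun ω => mem_Icc.2 ⟨one_le_suR (hQi ω), suR_le a (Q ω)⟩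
  rw [← probReal_univ (μ := μ), ← hcover]
  exact sum_measureReal_preimage_singleton _ fun k hk =>
    hQ (measurableSet_suR_eq (mem_Icc.1 hk).1 (mem_Icc.1 hk).2)

end Model

lemma bh_monotone {m : ℕ} {α : ℝ} (hα : 0 ≤ α) : Monotone (bh m α) := fun j k hjk => by
  unfold bh
  gcongr

lemma bh_le_one {m k : ℕ} {α : ℝ} (hα : α ≤ 1) (hkm : k ≤ m) : bh m α k ≤ 1 := by
  refine div_le_one_of_le₀ ?_ (Nat.cast_nonneg m)
  calc (k : ℝ) * α ≤ k := mul_le_of_le_one_right (Nat.cast_nonneg k) hα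
    _ ≤ m := by exact_mod_cast hkm

theorem bh_stepup_fdr_equality_general
    {Ω : Type*} [MeasurableSpace Ω] (μ : Measure Ω) [IsProbabilityMeasure μ]
    (m : ℕ) (α : ℝ) (hα : α ∈ Set.Ioo (0:ℝ) 1)
    (I0 : Finset (Fin m)) (p : Ω → Fin m → ℝ)
    (hmeas : ∀ i, Measurable (fun ω => p ω i))
    -- (BI)(2): the true-null p-value vector is independent of the false-null one
    (hBI2 : IndepFun (fun ω (i : {i // i ∈ I0}) => p ω i)
      (fun ω (i : {i // i ∉ I0}) => p ω i) μ)
    -- the true-null p-values are jointly independent ...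
    (hBI3 : iIndepFun (fun (i : {i // i ∈ I0}) ω => p ω i.1) μ)
    -- ... and each uniformly distributed on [0,1]
    (hunif : ∀ i ∈ I0, Measure.map (fun ω => p ω i) μ = unif01) :
    suFDR μ (bh m α) p I0 = (I0.card : ℝ) / m * α := by
  have hmono : Monotone (bh m α) := bh_monotone hα.1.le
  have hbh1 : 0 ≤ bh m α 1 := div_nonneg (mul_nonneg (Nat.cast_nonneg 1) hα.1.le) m.cast_nonneg
  have hp : Measurable p := measurable_pi_lambda _ hmeas
  rw [suFDR_eq_sum_measureReal hmono hmeas]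
  calc ∑ i ∈ I0, ∑ k ∈ Icc 1 m, μ.real (p ⁻¹' {q | q i ≤ bh m α k ∧ suR (bh m α) q = k}) * (k : ℝ)⁻¹
      = ∑ i ∈ I0, α / m * ∑ k ∈ Icc 1 m,
          μ.real ((fun ω => Function.update (p ω) i 0) ⁻¹' {q | suR (bh m α) q = k}) := by
        refine sum_congr rfl fun i hi => ?_
        rw [mul_sum]
        refine sum_congr rfl fun k hk => ?_
        obtain ⟨hk1, hkm⟩ := mem_Icc.1 hk
        rw [measureReal_rejected_and_suR_eq hmono hbh1 hk1 hkm (bh_le_one hα.2.le hkm) hmeas hBI2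
          hBI3 hi (hunif i hi), bh]
        field_simp
    _ = ∑ i ∈ I0, α / m := sum_congr rfl fun i _ => by
        rw [sum_measureReal_suR_eq_one (i := i) (by fun_prop) (fun ω => by simpa using hbh1),
          mul_one]
    _ = (I0.card : ℝ) / m * α := by
        rw [sum_const, nsmul_eq_mul]
        ring

/-- Under the basic independence model with i.i.d. uniform true
p-values, the BH step-up test has FDR exactly `(m₀/m)·α`. -/
theorem bh_stepup_fdr_equality
    {Ω : Type*} [MeasurableSpace Ω] (μ : Measure Ω) [IsProbabilityMeasure μ]
    (m : ℕ) (hm : 1 ≤ m) (α : ℝ) (hα : α ∈ Set.Ioo (0:ℝ) 1)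
    (I0 : Finset (Fin m)) (p : Ω → Fin m → ℝ)
    (hmeas : ∀ i, Measurable (fun ω => p ω i))
    (hrange : ∀ ω i, p ω i ∈ Set.Icc (0:ℝ) 1)
    -- (BI)(2): the true-null p-value vector is independent of the false-null one
    (hBI2 : IndepFun (fun ω (i : {i // i ∈ I0}) => p ω i)
      (fun ω (i : {i // i ∉ I0}) => p ω i) μ)
    -- the true-null p-values are jointly independent ...
    (hBI3 : iIndepFun (fun (i : {i // i ∈ I0}) ω => p ω i.1) μ)
    -- ... and each uniformly distributed on [0,1]
    (hunif : ∀ i ∈ I0, Measure.map (fun ω => p ω i) μ = unif01) :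
    suFDR μ (bh m α) p I0 = (I0.card : ℝ) / m * α :=
  bh_stepup_fdr_equality_general μ m α hα I0 p hmeas hBI2 hBI3 hunif
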